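/- arXiv:1906.09887 — 2 statements merged into one kernel-verified Lean document; each statement's English description precedes it below -/
import Mathlib

section
/- For every function f : (1/N)ℤ → ℝ in L²(ν_{γ,N}), the SIP difference Dirichlet form dominates the random-walk Dirichlet form: E_N(f) - R_N(f) = (N²/√2)·γ·Σ_{r∈A_N} 2p_N(r)(f(r)-f(0))² ≥ 0, hence E_N(f) ≥ R_N(f). -/
/-- The reversible measure `ν_{γ,N} = (1/N)·counting + √2 γ δ_0` on the lattice `(1/N)ℤ`,
indexed by `ℤ` (site `i` stands for `i/N`). -/
noncomputable def nuSIP (γ : ℝ) (N : ℕ) (i : ℤ) : ℝ :=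
  1 / N + if i = 0 then Real.sqrt 2 * γ else 0

/-- The diffusively rescaled random-walk Dirichlet form on `(1/N)ℤ`
(`A_N = (1/N)({−R,…,R}\{0})` indexed by `r ∈ {−R,…,R}\{0}`, `p_N(r) = p(Nr)` encoded as `p r`). -/
noncomputable def dirRW (N : ℕ) (R : ℕ) (p : ℤ → ℝ) (f : ℤ → ℝ) : ℝ :=
  -∑' i : ℤ, f i *
      (∑ r ∈ (Finset.Icc (-(R : ℤ)) R).erase 0,
        2 * p r * ((N : ℝ) ^ 2 / 2) * (f (i + r) - f i)) * (1 / N)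

/-- The Dirichlet form of the (condensively rescaled) SIP difference process on `(1/N)ℤ`. -/
noncomputable def dirSIPdiff (γ : ℝ) (N : ℕ) (R : ℕ) (p : ℤ → ℝ) (f : ℤ → ℝ) : ℝ :=
  -∑' i : ℤ, f i *
      (∑ r ∈ (Finset.Icc (-(R : ℤ)) R).erase 0,
        2 * p r * ((N : ℝ) ^ 2 / 2 +
          (N : ℝ) ^ 3 * γ / Real.sqrt 2 * (if i + r = 0 then 1 else 0)) *
          (f (i + r) - f i)) * nuSIP γ N i

lemma summable_mul_shift (f : ℤ → ℝ) (hf : Summable fun i : ℤ => f i ^ 2) (r : ℤ) :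
    Summable fun i : ℤ => f i * f (i + r) := by
  have h2 : Summable fun i : ℤ => f (i + r) ^ 2 :=
    hf.comp_injective (add_left_injective r)
  refine Summable.of_abs (Summable.of_nonneg_of_le (fun i => abs_nonneg _)
    (fun i => ?_) ((hf.add h2).div_const 2))
  rw [abs_mul]
  nlinarith [sq_nonneg (|f i| - |f (i + r)|), sq_abs (f i), sq_abs (f (i + r))]

/-- The SIP difference Dirichlet form dominates the random-walk Dirichlet form:
`E_N(f) − R_N(f) = (N²/√2)·γ·Σ_{r∈A_N} 2 p_N(r) (f(r)−f(0))² ≥ 0`, hence `E_N(f) ≥ R_N(f)`,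
for every `f ∈ L²(ν_{γ,N})`. -/
theorem dirSIP_dominates_dirRW (γ : ℝ) (hγ : 0 < γ) (N : ℕ) (hN : 0 < N) (R : ℕ)
    (p : ℤ → ℝ) (hsym : ∀ r, p r = p (-r)) (hzero : p 0 = 0) (hpos : ∀ r, 0 ≤ p r)
    (f : ℤ → ℝ) (hf : Summable fun i : ℤ => f i ^ 2) :
    dirSIPdiff γ N R p f - dirRW N R p f =
      (N : ℝ) ^ 2 / Real.sqrt 2 * γ *
        ∑ r ∈ (Finset.Icc (-(R : ℤ)) R).erase 0, 2 * p r * (f r - f 0) ^ 2 ∧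
    dirRW N R p f ≤ dirSIPdiff γ N R p f := by
  classical
  have hNne : (N : ℝ) ≠ 0 := Nat.cast_ne_zero.mpr hN.ne'
  have hs0 : Real.sqrt 2 ≠ 0 := by positivity
  have hs2 : Real.sqrt 2 * Real.sqrt 2 = 2 := Real.mul_self_sqrt (by norm_num)
  set B : Finset ℤ := Finset.Icc (-(R : ℤ)) R with hBdef
  set A : Finset ℤ := B.erase 0 with hAdef
  set g : ℤ → ℝ := fun i => f i *
      (∑ r ∈ A, 2 * p r * ((N : ℝ) ^ 2 / 2) * (f (i + r) - f i)) * (1 / N) with hgdef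
  set h : ℤ → ℝ := fun i => f i *
      (∑ r ∈ A, 2 * p r * ((N : ℝ) ^ 2 / 2 +
          (N : ℝ) ^ 3 * γ / Real.sqrt 2 * (if i + r = 0 then 1 else 0)) *
          (f (i + r) - f i)) * nuSIP γ N i with hhdef
  have eqRW : dirRW N R p f = -∑' i, g i := by
    simp only [dirRW, hgdef, hAdef, hBdef]
  have eqSIP : dirSIPdiff γ N R p f = -∑' i, h i := by
    simp only [dirSIPdiff, hhdef, hAdef, hBdef]
  -- summability of g
  have hg : Summable g := by
    have hsummed : Summable fun i => ∑ r ∈ A,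
        ((2 * p r * ((N : ℝ) ^ 2 / 2) * (1 / N)) * (f i * f (i + r))
          - (2 * p r * ((N : ℝ) ^ 2 / 2) * (1 / N)) * f i ^ 2) :=
      summable_sum fun r _ =>
        ((summable_mul_shift f hf r).mul_left _).sub (hf.mul_left _)
    refine hsummed.congr fun i => ?_
    rw [hgdef]
    simp only
    rw [Finset.mul_sum, Finset.sum_mul]
    exact Finset.sum_congr rfl fun r _ => by ring
  have h0B : (0 : ℤ) ∈ B := by simp [hBdef]
  -- the difference vanishes off B
  have hD0 : ∀ i ∉ B, h i - g i = 0 := by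
    intro i hi
    have hi0 : i ≠ 0 := fun e => hi (e ▸ h0B)
    have hne : ∀ r ∈ A, i + r ≠ 0 := by
      intro r hr h0
      apply hi
      have hr' := Finset.mem_of_mem_erase hr
      simp only [hBdef, Finset.mem_Icc] at hr' ⊢
      omega
    have hSeq : (∑ r ∈ A, 2 * p r * ((N : ℝ) ^ 2 / 2 +
          (N : ℝ) ^ 3 * γ / Real.sqrt 2 * (if i + r = 0 then 1 else 0)) *
          (f (i + r) - f i))
        = ∑ r ∈ A, 2 * p r * ((N : ℝ) ^ 2 / 2) * (f (i + r) - f i) :=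
      Finset.sum_congr rfl fun r hr => by rw [if_neg (hne r hr)]; ring
    rw [hhdef, hgdef]
    simp only [nuSIP, if_neg hi0, hSeq]
    ring
  have hDsum : Summable fun i => h i - g i := summable_of_ne_finset_zero hD0
  -- value of the difference at 0
  have hD0eq : h 0 - g 0 = Real.sqrt 2 * γ *
      (f 0 * ∑ r ∈ A, 2 * p r * ((N : ℝ) ^ 2 / 2) * (f r - f 0)) := by
    have hS1 : (∑ r ∈ A, 2 * p r * ((N : ℝ) ^ 2 / 2 +
          (N : ℝ) ^ 3 * γ / Real.sqrt 2 * (if (0 : ℤ) + r = 0 then 1 else 0)) *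
          (f ((0 : ℤ) + r) - f 0))
        = ∑ r ∈ A, 2 * p r * ((N : ℝ) ^ 2 / 2) * (f r - f 0) := by
      refine Finset.sum_congr rfl fun r hr => ?_
      rw [zero_add, if_neg (Finset.ne_of_mem_erase hr)]
      ring
    have hS2 : (∑ r ∈ A, 2 * p r * ((N : ℝ) ^ 2 / 2) * (f ((0 : ℤ) + r) - f 0))
        = ∑ r ∈ A, 2 * p r * ((N : ℝ) ^ 2 / 2) * (f r - f 0) :=
      Finset.sum_congr rfl fun r hr => by rw [zero_add]
    have hnu0 : nuSIP γ N 0 = 1 / N + Real.sqrt 2 * γ := by simp [nuSIP]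
    simp only [hhdef, hgdef]
    rw [hS1, hS2, hnu0]
    ring
  -- value of the difference at i ∈ A
  have hDieq : ∀ i ∈ A, h i - g i =
      f i * (2 * p i * ((N : ℝ) ^ 3 * γ / Real.sqrt 2) * (f 0 - f i)) * (1 / N) := by
    intro i hi
    have hi0 : i ≠ 0 := Finset.ne_of_mem_erase hi
    have hmi : -i ∈ A := by
      simp only [hAdef, hBdef, Finset.mem_erase, Finset.mem_Icc] at hi ⊢
      omega
    have hsplit : (∑ r ∈ A, 2 * p r * ((N : ℝ) ^ 2 / 2 +
          (N : ℝ) ^ 3 * γ / Real.sqrt 2 * (if i + r = 0 then 1 else 0)) *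
          (f (i + r) - f i))
        = (∑ r ∈ A, 2 * p r * ((N : ℝ) ^ 2 / 2) * (f (i + r) - f i))
          + 2 * p i * ((N : ℝ) ^ 3 * γ / Real.sqrt 2) * (f 0 - f i) := by
      have step1 : (∑ r ∈ A, 2 * p r * ((N : ℝ) ^ 2 / 2 +
            (N : ℝ) ^ 3 * γ / Real.sqrt 2 * (if i + r = 0 then 1 else 0)) *
            (f (i + r) - f i))
          = ∑ r ∈ A, (2 * p r * ((N : ℝ) ^ 2 / 2) * (f (i + r) - f i)
              + (if r = -i then 2 * p r * ((N : ℝ) ^ 3 * γ / Real.sqrt 2) *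
                  (f (i + r) - f i) else 0)) := by
        refine Finset.sum_congr rfl fun r hr => ?_
        by_cases hc : r = -i
        · subst hc
          rw [if_pos (by ring : i + -i = 0), if_pos rfl]
          ring
        · rw [if_neg (fun h0 => hc (by omega)), if_neg hc]
          ring
      rw [step1, Finset.sum_add_distrib, Finset.sum_ite_eq' A (-i), if_pos hmi]
      have : i + -i = 0 := by ring
      rw [this, ← hsym i]
    rw [hhdef, hgdef]
    simp only [hsplit, nuSIP, if_neg hi0, add_zero]
    ring
  -- evaluate the finite sum of the difference
  have hdiv : ∀ a : ℝ, a / Real.sqrt 2 = a * Real.sqrt 2 / 2 := fun a => by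
    rw [div_eq_div_iff hs0 two_ne_zero, mul_assoc, hs2]
  have hfin : -(∑ i ∈ B, (h i - g i))
      = (N : ℝ) ^ 2 / Real.sqrt 2 * γ * ∑ r ∈ A, 2 * p r * (f r - f 0) ^ 2 := by
    rw [← Finset.add_sum_erase B _ h0B, ← hAdef, hD0eq,
      Finset.sum_congr rfl hDieq, Finset.mul_sum, Finset.mul_sum, Finset.mul_sum,
      neg_add, ← Finset.sum_neg_distrib, ← Finset.sum_neg_distrib,
      ← Finset.sum_add_distrib]
    refine Finset.sum_congr rfl fun r _ => ?_
    rw [hdiv ((N : ℝ) ^ 3 * γ), hdiv ((N : ℝ) ^ 2)]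
    field_simp
    ring
  -- put everything together
  have key : dirSIPdiff γ N R p f - dirRW N R p f =
      (N : ℝ) ^ 2 / Real.sqrt 2 * γ *
        ∑ r ∈ (Finset.Icc (-(R : ℤ)) R).erase 0, 2 * p r * (f r - f 0) ^ 2 := by
    have htsum : ∑' i, h i = ∑' i, g i + ∑' i, (h i - g i) := by
      rw [← Summable.tsum_add hg hDsum]
      exact tsum_congr fun i => by ring
    rw [eqSIP, eqRW, htsum, tsum_eq_sum hD0, ← hBdef, ← hAdef]
    rw [show -(∑' i, g i + ∑ i ∈ B, (h i - g i)) - -∑' i, g i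
        = -(∑ i ∈ B, (h i - g i)) by ring]
    exact hfin
  refine ⟨key, ?_⟩
  have hnn : 0 ≤ (N : ℝ) ^ 2 / Real.sqrt 2 * γ *
      ∑ r ∈ (Finset.Icc (-(R : ℤ)) R).erase 0, 2 * p r * (f r - f 0) ^ 2 := by
    refine mul_nonneg (by positivity) (Finset.sum_nonneg fun r _ => ?_)
    exact mul_nonneg (mul_nonneg (by norm_num) (hpos r)) (sq_nonneg _)
  linarith
end

section
/- Suppose for every g in the limiting Hilbert space H there exists a sequence g_N ∈ H_N strongly converging to g with lim_N E*_N(g_N) = E*(g), where E* denotes the Legendre–Fenchel dual of the quadratic form E. Then for every weakly convergent sequence f_N → f (f_N ∈ H_N, f ∈ H) one has liminf_N E_N(f_N) ≥ E(f). -/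
open Filter Topology

section KuwaeShioya

variable {H : Type*} [NormedAddCommGroup H] [InnerProductSpace ℝ H]
variable {HN : ℕ → Type*} [∀ n, NormedAddCommGroup (HN n)] [∀ n, InnerProductSpace ℝ (HN n)]

/-- Strong convergence of `f_N ∈ H_N` to `f ∈ H` in the Kuwae–Shioya sense, witnessed by a
dense subspace `C ⊆ H` and linear maps `Φ_N : C → H_N`. -/
def KSStrong (C : Submodule ℝ H) (Φ : ∀ n, C →ₗ[ℝ] HN n)
    (fN : ∀ n, HN n) (f : H) : Prop :=
  ∃ ft : ℕ → C,
    Tendsto (fun M => ‖(ft M : H) - f‖) atTop (𝓝 0) ∧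
    Tendsto (fun M => limsup (fun N => ‖Φ N (ft M) - fN N‖) atTop) atTop (𝓝 0)

/-- Weak convergence of `f_N ∈ H_N` to `f ∈ H`: `⟨f_N, g_N⟩ → ⟨f, g⟩` for all strongly
convergent sequences `g_N → g`. -/
def KSWeak (C : Submodule ℝ H) (Φ : ∀ n, C →ₗ[ℝ] HN n)
    (fN : ∀ n, HN n) (f : H) : Prop :=
  ∀ (gN : ∀ n, HN n) (g : H), KSStrong C Φ gN g →
    Tendsto (fun n => (inner ℝ (fN n) (gN n) : ℝ)) atTop (𝓝 (inner ℝ f g))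

/-- The Legendre–Fenchel dual `E*(f) = sup_g (⟨f,g⟩ − E(g))` of an extended-real-valued
quadratic form. -/
noncomputable def dualForm {W : Type*} [NormedAddCommGroup W] [InnerProductSpace ℝ W]
    (E : W → EReal) (f : W) : EReal :=
  ⨆ g : W, ((inner ℝ f g : ℝ) : EReal) - E g

private lemma ereal_sub_swap (c : ℝ) {a b : EReal} (h : (c : EReal) - a ≤ b) :
    (c : EReal) - b ≤ a := by
  induction a with
  | bot =>
    rw [EReal.coe_sub_bot, top_le_iff] at h
    simp [h]
  | coe a =>
    rw [EReal.sub_le_iff_le_add (.inl (EReal.coe_ne_bot a)) (.inl (EReal.coe_ne_top a))] at h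
    rw [EReal.sub_le_iff_le_add (.inr (EReal.coe_ne_top a)) (.inr (EReal.coe_ne_bot a))]
    rwa [add_comm] at h
  | top => exact le_top

/-- Mosco I from convergence of dual forms along strongly convergent recovery sequences:
if the forms are involutive (`(E*)* = E`) and for every `g ∈ H` there is a strongly
convergent sequence `g_N → g` with `E*_N(g_N) → E*(g)`, then for every weakly convergent
sequence `f_N → f` one has `E(f) ≤ liminf_N E_N(f_N)`. -/
theorem moscoI_of_dual_convergence (C : Submodule ℝ H) (hC : Dense (C : Set H))
    (Φ : ∀ n, C →ₗ[ℝ] HN n)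
    (hΦ : ∀ f : C, Tendsto (fun n => ‖Φ n f‖) atTop (𝓝 ‖(f : H)‖))
    (EN : ∀ n, HN n → EReal) (E : H → EReal)
    (hinv : ∀ f : H, dualForm (dualForm E) f = E f)
    (hdual : ∀ g : H, ∃ gN : ∀ n, HN n, KSStrong C Φ gN g ∧
      Tendsto (fun n => dualForm (EN n) (gN n)) atTop (𝓝 (dualForm E g)))
    (fN : ∀ n, HN n) (f : H) (hw : KSWeak C Φ fN f) :
    E f ≤ liminf (fun n => EN n (fN n)) atTop := by
  rw [← hinv f, dualForm]
  refine iSup_le fun g => ?_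
  obtain ⟨gN, hgs, hgt⟩ := hdual g
  have hw' := hw gN g hgs
  -- pointwise lower bound
  have key : ∀ n, ((inner ℝ (fN n) (gN n) : ℝ) : EReal) - dualForm (EN n) (gN n) ≤ EN n (fN n) := by
    intro n
    apply ereal_sub_swap
    have h := le_iSup (fun h => ((inner ℝ (gN n) h : ℝ) : EReal) - EN n h) (fN n)
    rwa [real_inner_comm] at h
  -- convergence of the lower bound
  have htc : Tendsto (fun n => ((inner ℝ (fN n) (gN n) : ℝ) : EReal)) atTop
      (𝓝 ((inner ℝ f g : ℝ) : EReal)) :=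
    (continuous_coe_real_ereal.tendsto _).comp hw'
  have htn : Tendsto (fun n => -dualForm (EN n) (gN n)) atTop (𝓝 (-dualForm E g)) :=
    (continuous_neg.tendsto _).comp hgt
  have htend : Tendsto (fun n => ((inner ℝ (fN n) (gN n) : ℝ) : EReal) - dualForm (EN n) (gN n))
      atTop (𝓝 (((inner ℝ f g : ℝ) : EReal) - dualForm E g)) := by
    simp only [sub_eq_add_neg]
    exact (EReal.continuousAt_add (p := (((inner ℝ f g : ℝ) : EReal), -dualForm E g))
      (.inl (EReal.coe_ne_top _)) (.inl (EReal.coe_ne_bot _))).tendsto.comp (htc.prodMk_nhds htn)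
  calc ((inner ℝ f g : ℝ) : EReal) - dualForm E g
      = liminf (fun n => ((inner ℝ (fN n) (gN n) : ℝ) : EReal) - dualForm (EN n) (gN n)) atTop :=
        htend.liminf_eq.symm
    _ ≤ liminf (fun n => EN n (fN n)) atTop :=
        liminf_le_liminf (Eventually.of_forall key)

end KuwaeShioya
end
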